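/- For every integer ν ≥ 5, the Chern–Moser operator T_ν is injective; that is, if η,α are weighted homogeneous of weight ν, β,ξ are weighted homogeneous of weight ν−1, and η(x, a+bx) − α(a,b) − x·β(a,b) − b·ξ(x, a+bx) = 0 identically, then η = α = β = ξ = 0. -/
import Mathlib


/- Weights: for polynomials in (x,y) (variables of `MvPolynomial (Fin 2) ℝ`,
   indices 0,1): x ↦ 1, y ↦ 2; for polynomials in (a,b): a ↦ 2, b ↦ 1.
   In `MvPolynomial (Fin 3) ℝ` the variables are (a,b,x), indices 0,1,2. -/

open MvPolynomial

/-- weights on the variables (x, y) -/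
noncomputable def wXY : Fin 2 → ℕ := ![1, 2]
/-- weights on the variables (a, b) -/
noncomputable def wAB : Fin 2 → ℕ := ![2, 1]

/-- The Chern–Moser operator:
`T(η,α,β,ξ)(a,b,x) = η(x, a+bx) − α(a,b) − x·β(a,b) − b·ξ(x, a+bx)`. -/
noncomputable def cmT (η α β ξ : MvPolynomial (Fin 2) ℝ) : MvPolynomial (Fin 3) ℝ :=
  aeval ![(X 2 : MvPolynomial (Fin 3) ℝ), X 0 + X 1 * X 2] η
  - aeval ![(X 0 : MvPolynomial (Fin 3) ℝ), X 1] α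
  - X 2 * aeval ![(X 0 : MvPolynomial (Fin 3) ℝ), X 1] β
  - X 1 * aeval ![(X 2 : MvPolynomial (Fin 3) ℝ), X 0 + X 1 * X 2] ξ

namespace CMaux

open Finset

noncomputable def m2 (i j : ℕ) : Fin 2 →₀ ℕ := Finsupp.single 0 i + Finsupp.single 1 j
noncomputable def m3 (p q r : ℕ) : Fin 3 →₀ ℕ :=
  Finsupp.single 0 p + Finsupp.single 1 q + Finsupp.single 2 r

lemma m3_inj {p q r p' q' r' : ℕ} : m3 p q r = m3 p' q' r' ↔ p = p' ∧ q = q' ∧ r = r' := by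
  constructor
  · intro h
    have h0 := DFunLike.congr_fun h 0
    have h1 := DFunLike.congr_fun h 1
    have h2 := DFunLike.congr_fun h 2
    simp [m3, Finsupp.single_apply] at h0 h1 h2
    exact ⟨h0, h1, h2⟩
  · rintro ⟨rfl, rfl, rfl⟩; rfl

lemma m3_apply1 (p q r : ℕ) : (m3 p q r) 1 = q := by simp [m3, Finsupp.single_apply]
lemma m3_apply2 (p q r : ℕ) : (m3 p q r) 2 = r := by simp [m3, Finsupp.single_apply]

lemma m3_sub2 (p q r : ℕ) : m3 p q r - Finsupp.single 2 1 = m3 p q (r - 1) := by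
  ext i; fin_cases i <;> simp [m3, Finsupp.single_apply]
lemma m3_sub1 (p q r : ℕ) : m3 p q r - Finsupp.single 1 1 = m3 p (q - 1) r := by
  ext i; fin_cases i <;> simp [m3, Finsupp.single_apply]

lemma m2_apply0 (i j : ℕ) : (m2 i j) 0 = i := by simp [m2]
lemma m2_apply1 (i j : ℕ) : (m2 i j) 1 = j := by simp [m2, Finsupp.single_apply]

lemma m2_self (d : Fin 2 →₀ ℕ) : m2 (d 0) (d 1) = d := by
  ext i; fin_cases i <;> simp [m2, Finsupp.single_apply]

lemma eq_m2_iff {d : Fin 2 →₀ ℕ} {i j : ℕ} : d = m2 i j ↔ d 0 = i ∧ d 1 = j := by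
  constructor
  · rintro rfl; exact ⟨m2_apply0 i j, m2_apply1 i j⟩
  · rintro ⟨h0, h1⟩; rw [← m2_self d, h0, h1]

lemma X_pow_mul_eq (a b c : ℕ) :
    (X 0 : MvPolynomial (Fin 3) ℝ) ^ a * X 1 ^ b * X 2 ^ c = monomial (m3 a b c) 1 := by
  simp [X_pow_eq_monomial, monomial_mul, m3]

lemma coeff_pow_term (i j p q r : ℕ) :
    coeff (m3 p q r) ((X 2 : MvPolynomial (Fin 3) ℝ) ^ i * (X 0 + X 1 * X 2) ^ j)
    = if p + q = j ∧ i + q = r then (j.choose p : ℝ) else 0 := by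
  have expand : (X 2 : MvPolynomial (Fin 3) ℝ) ^ i * (X 0 + X 1 * X 2) ^ j
      = ∑ k ∈ range (j + 1), monomial (m3 k (j - k) (i + (j - k))) ((j.choose k : ℝ)) := by
    rw [add_pow, Finset.mul_sum]
    refine Finset.sum_congr rfl fun k hk => ?_
    have : (X 2 : MvPolynomial (Fin 3) ℝ) ^ i * (X 0 ^ k * (X 1 * X 2) ^ (j-k) * (j.choose k : MvPolynomial (Fin 3) ℝ))
        = (X 0 ^ k * X 1 ^ (j-k) * X 2 ^ (i + (j-k))) * C ((j.choose k : ℝ)) := by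
      rw [← C_eq_coe_nat, mul_pow, pow_add]
      ring
    rw [this, X_pow_mul_eq, mul_comm, C_mul_monomial, mul_one]
  rw [expand, coeff_sum]
  simp only [coeff_monomial, m3_inj]
  by_cases hc : p + q = j ∧ i + q = r
  · obtain ⟨hj, hr⟩ := hc
    rw [Finset.sum_eq_single p]
    · simp [← hj, ← hr]
    · intro k hk hkp
      rw [if_neg]; rintro ⟨rfl, -, -⟩; exact hkp rfl
    · intro hp
      exfalso; exact hp (Finset.mem_range.2 (by omega))
  · rw [if_neg hc]
    refine Finset.sum_eq_zero fun k hk => ?_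
    rw [if_neg]
    rintro ⟨rfl, rfl, rfl⟩
    rw [Finset.mem_range] at hk
    exact hc ⟨by omega, by omega⟩

lemma aeval_eq_sum (f : Fin 2 → MvPolynomial (Fin 3) ℝ) (η : MvPolynomial (Fin 2) ℝ) :
    aeval f η = ∑ d ∈ η.support, C (coeff d η) * (f 0 ^ d 0 * f 1 ^ d 1) := by
  conv_lhs => rw [η.as_sum]
  rw [map_sum]
  refine Finset.sum_congr rfl fun d hd => ?_
  rw [aeval_monomial, Finsupp.prod_pow]
  simp [Fin.prod_univ_two, algebraMap_eq]

lemma coeff_subst_A (η : MvPolynomial (Fin 2) ℝ) (p q r : ℕ) :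
    coeff (m3 p q r) (aeval ![(X 2 : MvPolynomial (Fin 3) ℝ), X 0 + X 1 * X 2] η)
    = if q ≤ r then ((p+q).choose p : ℝ) * coeff (m2 (r - q) (p + q)) η else 0 := by
  rw [aeval_eq_sum, coeff_sum]
  have step : ∀ d ∈ η.support,
      coeff (m3 p q r) (C (coeff d η) * (![(X 2 : MvPolynomial (Fin 3) ℝ), X 0 + X 1 * X 2] 0 ^ d 0
        * ![(X 2 : MvPolynomial (Fin 3) ℝ), X 0 + X 1 * X 2] 1 ^ d 1))
      = if d = m2 (r - q) (p + q) ∧ q ≤ r then coeff d η * ((p+q).choose p : ℝ) else 0 := by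
    intro d hd
    have e0 : (![(X 2 : MvPolynomial (Fin 3) ℝ), X 0 + X 1 * X 2] 0) = X 2 := rfl
    have e1 : (![(X 2 : MvPolynomial (Fin 3) ℝ), X 0 + X 1 * X 2] 1) = X 0 + X 1 * X 2 := rfl
    rw [e0, e1, coeff_C_mul, coeff_pow_term]
    have hiff : (p + q = d 1 ∧ d 0 + q = r) ↔ (d = m2 (r - q) (p + q) ∧ q ≤ r) := by
      rw [eq_m2_iff]; omega
    by_cases hc : p + q = d 1 ∧ d 0 + q = r
    · rw [if_pos hc, if_pos (hiff.1 hc), hc.1]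
    · rw [if_neg hc, if_neg (fun h => hc (hiff.2 h)), mul_zero]
  rw [Finset.sum_congr rfl step]
  by_cases hqr : q ≤ r
  · simp only [hqr, and_true]
    rw [Finset.sum_ite_eq' η.support (m2 (r-q) (p+q)) (fun d => coeff d η * ((p+q).choose p : ℝ))]
    by_cases hm : m2 (r-q) (p+q) ∈ η.support
    · simp [hm, mul_comm]
    · simp [hm, notMem_support_iff.1 hm]
  · simp only [hqr, and_false, if_false, Finset.sum_const_zero]

lemma coeff_subst_R (α : MvPolynomial (Fin 2) ℝ) (p q r : ℕ) :
    coeff (m3 p q r) (aeval ![(X 0 : MvPolynomial (Fin 3) ℝ), X 1] α)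
    = if r = 0 then coeff (m2 p q) α else 0 := by
  rw [aeval_eq_sum, coeff_sum]
  have step : ∀ d ∈ α.support,
      coeff (m3 p q r) (C (coeff d α) * (![(X 0 : MvPolynomial (Fin 3) ℝ), X 1] 0 ^ d 0
        * ![(X 0 : MvPolynomial (Fin 3) ℝ), X 1] 1 ^ d 1))
      = if d = m2 p q ∧ r = 0 then coeff d α else 0 := by
    intro d hd
    have e0 : (![(X 0 : MvPolynomial (Fin 3) ℝ), X 1] 0) = X 0 := rfl
    have e1 : (![(X 0 : MvPolynomial (Fin 3) ℝ), X 1] 1) = X 1 := rfl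
    rw [e0, e1]
    have hm : (X 0 : MvPolynomial (Fin 3) ℝ) ^ d 0 * X 1 ^ d 1
        = monomial (m3 (d 0) (d 1) 0) 1 := by
      rw [← X_pow_mul_eq (d 0) (d 1) 0, pow_zero, mul_one]
    rw [hm, C_mul_monomial, mul_one, coeff_monomial]
    have hiff : (m3 (d 0) (d 1) 0 = m3 p q r) ↔ (d = m2 p q ∧ r = 0) := by
      rw [m3_inj, eq_m2_iff]
      constructor
      · rintro ⟨h0, h1, h2⟩; exact ⟨⟨h0, h1⟩, h2.symm⟩
      · rintro ⟨⟨h0, h1⟩, h2⟩; exact ⟨h0, h1, h2.symm⟩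
    by_cases hc : m3 (d 0) (d 1) 0 = m3 p q r
    · rw [if_pos hc, if_pos (hiff.1 hc)]
    · rw [if_neg hc, if_neg (fun h => hc (hiff.2 h))]
  rw [Finset.sum_congr rfl step]
  by_cases hr : r = 0
  · simp only [hr, and_true]
    rw [Finset.sum_ite_eq' α.support (m2 p q) (fun d => coeff d α)]
    by_cases hm : m2 p q ∈ α.support
    · simp [hm]
    · simp [hm, notMem_support_iff.1 hm]
  · simp only [hr, and_false, if_false, Finset.sum_const_zero]

lemma coeff_cmT (η α β ξ : MvPolynomial (Fin 2) ℝ) (p q r : ℕ) :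
    coeff (m3 p q r) (cmT η α β ξ)
    = (if q ≤ r then ((p+q).choose p : ℝ) * coeff (m2 (r - q) (p + q)) η else 0)
    - (if r = 0 then coeff (m2 p q) α else 0)
    - (if r = 1 then coeff (m2 p q) β else 0)
    - (if 1 ≤ q ∧ q - 1 ≤ r then ((p + (q-1)).choose p : ℝ) * coeff (m2 (r - (q-1)) (p + (q-1))) ξ else 0) := by
  classical
  have h3 : coeff (m3 p q r) ((X 2 : MvPolynomial (Fin 3) ℝ)
      * aeval ![(X 0 : MvPolynomial (Fin 3) ℝ), X 1] β)
      = if r = 1 then coeff (m2 p q) β else 0 := by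
    rw [coeff_X_mul', m3_sub2, coeff_subst_R]
    simp only [Finsupp.mem_support_iff, m3_apply2]
    split_ifs with h1 h2 h4 <;> first | rfl | omega
  have h4 : coeff (m3 p q r) ((X 1 : MvPolynomial (Fin 3) ℝ)
      * aeval ![(X 2 : MvPolynomial (Fin 3) ℝ), X 0 + X 1 * X 2] ξ)
      = if 1 ≤ q ∧ q - 1 ≤ r then ((p + (q-1)).choose p : ℝ)
          * coeff (m2 (r - (q-1)) (p + (q-1))) ξ else 0 := by
    rw [coeff_X_mul', m3_sub1, coeff_subst_A]
    simp only [Finsupp.mem_support_iff, m3_apply1]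
    split_ifs with h1 h2 h5 <;> first | rfl | omega
  rw [cmT, coeff_sub, coeff_sub, coeff_sub, coeff_subst_A, coeff_subst_R, h3, h4]

lemma weight_wXY (d : Fin 2 →₀ ℕ) : Finsupp.weight wXY d = d 0 * 1 + d 1 * 2 := by
  rw [Finsupp.weight_apply, Finsupp.sum_fintype]
  · simp [Fin.sum_univ_two, wXY, mul_comm]
  · intro i; simp

end CMaux

open CMaux

theorem stmt1 (ν : ℕ) (hν : 5 ≤ ν) (η α β ξ : MvPolynomial (Fin 2) ℝ)
    (hη : η.IsWeightedHomogeneous wXY ν) (hα : α.IsWeightedHomogeneous wAB ν)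
    (hβ : β.IsWeightedHomogeneous wAB (ν - 1)) (hξ : ξ.IsWeightedHomogeneous wXY (ν - 1))
    (hT : cmT η α β ξ = 0) :
    η = 0 ∧ α = 0 ∧ β = 0 ∧ ξ = 0 := by
  have key : ∀ p q r : ℕ,
      (if q ≤ r then ((p+q).choose p : ℝ) * coeff (m2 (r - q) (p + q)) η else 0)
      - (if r = 0 then coeff (m2 p q) α else 0)
      - (if r = 1 then coeff (m2 p q) β else 0)
      - (if 1 ≤ q ∧ q - 1 ≤ r then ((p + (q-1)).choose p : ℝ)
          * coeff (m2 (r - (q-1)) (p + (q-1))) ξ else 0) = 0 := by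
    intro p q r
    rw [← coeff_cmT, hT, coeff_zero]
  -- step 1 : η = 0
  have hη0 : η = 0 := by
    rw [eq_zero_iff]
    intro d
    by_contra hne
    have hw := hη hne
    rw [weight_wXY] at hw
    by_cases h0 : d 0 = 0
    · -- i = 0 : ν = 2j, j ≥ 3
      obtain ⟨k, hk⟩ : ∃ k, d 1 = k + 3 := ⟨d 1 - 3, by omega⟩
      have hcd : m2 0 (k+3) = d := by rw [← m2_self d, h0, hk]
      have E1 := key 0 (k+3) (k+3)
      have E2 := key 1 (k+2) (k+2)
      simp only [show (0:ℕ) + (k+3) = k + 3 by omega, show (k+3) - (k+3) = 0 by omega,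
        show (k+3) - ((k+3)-1) = 1 by omega, show (0:ℕ) + ((k+3)-1) = k+2 by omega,
        Nat.choose_zero_right, Nat.cast_one, one_mul, le_refl, if_true,
        show ¬((k+3) = 0) by omega, show ¬((k+3) = 1) by omega, if_false,
        show (1 ≤ k+3 ∧ (k+3)-1 ≤ k+3) by omega, and_self, true_and, and_true, sub_zero] at E1
      simp only [show (1:ℕ) + (k+2) = k + 3 by omega, show (k+2) - (k+2) = 0 by omega,
        show (k+2) - ((k+2)-1) = 1 by omega, show (1:ℕ) + ((k+2)-1) = k+2 by omega,
        Nat.choose_one_right, le_refl, if_true,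
        show ¬((k+2) = 0) by omega, show ¬((k+2) = 1) by omega, if_false,
        show (1 ≤ k+2 ∧ (k+2)-1 ≤ k+2) by omega, and_self, true_and, and_true, sub_zero] at E2
      have hf : coeff (m2 1 (k+2)) ξ = coeff (m2 0 (k+3)) η := by linarith
      rw [hf] at E2
      have hz : coeff (m2 0 (k+3)) η = 0 := by push_cast at E2; linear_combination E2
      rw [hcd] at hz
      exact hne hz
    · by_cases h1 : d 0 = 1
      · -- i = 1 : ν = 2j+1, j ≥ 2
        obtain ⟨k, hk⟩ : ∃ k, d 1 = k + 2 := ⟨d 1 - 2, by omega⟩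
        have hcd : m2 1 (k+2) = d := by rw [← m2_self d, h1, hk]
        have E1 := key (k+1) 1 2
        have E2 := key 0 (k+2) (k+3)
        simp only [show (k+1) + 1 = k + 2 by omega, show (2:ℕ) - 1 = 1 by omega,
          show (1:ℕ) - 1 = 0 by omega, show (k+1) + 0 = k+1 by omega,
          show (2:ℕ) - 0 = 2 by omega,
          Nat.choose_succ_self_right, Nat.choose_self, Nat.cast_one, one_mul,
          show (1:ℕ) ≤ 2 by omega, if_true, show ¬((2:ℕ) = 0) by omega,
          show ¬((2:ℕ) = 1) by omega, if_false,
          show (1 ≤ 1 ∧ (1:ℕ) - 1 ≤ 2) by omega, and_self, true_and, and_true] at E1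
        simp only [show (0:ℕ) + (k+2) = k + 2 by omega, show (k+3) - (k+2) = 1 by omega,
          show (k+2) - 1 = k+1 by omega, show (0:ℕ) + (k+1) = k+1 by omega,
          show (k+3) - (k+1) = 2 by omega,
          Nat.choose_zero_right, Nat.cast_one, one_mul,
          show (k+2) ≤ k+3 by omega, if_true,
          show ¬((k+3) = 0) by omega, show ¬((k+3) = 1) by omega, if_false,
          show (1 ≤ k+2 ∧ k+1 ≤ k+3) by omega, and_self, true_and, and_true] at E2
        have hf : coeff (m2 2 (k+1)) ξ = coeff (m2 1 (k+2)) η := by linarith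
        rw [hf] at E1
        have hfac : ((k:ℝ) + 1) * coeff (m2 1 (k+2)) η = 0 := by
          push_cast at E1; linear_combination E1
        have hz : coeff (m2 1 (k+2)) η = 0 := by
          rcases mul_eq_zero.1 hfac with h | h
          · exact absurd h (by positivity)
          · exact h
        rw [hcd] at hz
        exact hne hz
      · -- i ≥ 2
        have hcd : m2 (d 0) (d 1) = d := m2_self d
        have E := key (d 1) 0 (d 0)
        simp only [Nat.add_zero, Nat.choose_self, Nat.cast_one, one_mul, Nat.sub_zero,
          Nat.zero_le, if_true, h0, h1, if_false,
          show ¬(1 ≤ 0 ∧ (0:ℕ) - 1 ≤ d 0) by omega, sub_zero] at E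
        rw [hcd] at E
        exact hne E
  -- step 2 : ξ = 0
  have hηc : ∀ u v : ℕ, coeff (m2 u v) η = 0 := by intro u v; rw [hη0, coeff_zero]
  have hξ0 : ξ = 0 := by
    rw [eq_zero_iff]
    intro d
    by_contra hne
    have hw := hξ hne
    rw [weight_wXY] at hw
    have hν1 : d 0 + d 1 * 2 = ν - 1 := by omega
    by_cases h0 : d 0 = 0
    · -- i = 0 : j ≥ 2 ; use p=0, q=j+1, r=j
      obtain ⟨k, hk⟩ : ∃ k, d 1 = k + 2 := ⟨d 1 - 2, by omega⟩
      have hcd : m2 0 (k+2) = d := by rw [← m2_self d, h0, hk]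
      have E := key 0 (k+3) (k+2)
      simp only [hηc, mul_zero, ite_self,
        show ¬((k+2) = 0) by omega, show ¬((k+2) = 1) by omega, if_false,
        show (1 ≤ k+3 ∧ (k+3)-1 ≤ k+2) by omega, and_self, true_and, and_true, if_true,
        show (k+3) - 1 = k + 2 by omega, show (0:ℕ) + (k+2) = k+2 by omega,
        show (k+2) - (k+2) = 0 by omega, le_refl,
        Nat.choose_zero_right, Nat.cast_one, one_mul] at E
      have hz : coeff (m2 0 (k+2)) ξ = 0 := by linarith
      rw [hcd] at hz
      exact hne hz
    · by_cases h1 : d 0 = 1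
      · -- i = 1 : j ≥ 2 ; use p=j-1, q=2, r=2
        obtain ⟨k, hk⟩ : ∃ k, d 1 = k + 2 := ⟨d 1 - 2, by omega⟩
        have hcd : m2 1 (k+2) = d := by rw [← m2_self d, h1, hk]
        have E := key (k+1) 2 2
        simp only [hηc, mul_zero, ite_self,
          show ¬((2:ℕ) = 0) by omega, show ¬((2:ℕ) = 1) by omega, if_false,
          show (1 ≤ 2 ∧ (2:ℕ)-1 ≤ 2) by omega, and_self, true_and, and_true, if_true,
          show (2:ℕ) - 1 = 1 by omega, show (k+1) + 1 = k+2 by omega,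
          Nat.choose_succ_self_right] at E
        have hcast : ((k:ℝ) + 2) * coeff (m2 1 (k+2)) ξ = 0 := by
          push_cast at E; linear_combination -E
        have hz : coeff (m2 1 (k+2)) ξ = 0 := by
          rcases mul_eq_zero.1 hcast with h | h
          · exact absurd h (by positivity)
          · exact h
        rw [hcd] at hz
        exact hne hz
      · -- i ≥ 2 : use p=j, q=1, r=i
        have hcd : m2 (d 0) (d 1) = d := m2_self d
        have E := key (d 1) 1 (d 0)
        simp only [hηc, mul_zero, ite_self, h0, h1, if_false,
          show (1 ≤ 1 ∧ (1:ℕ) - 1 ≤ d 0) by omega, and_self, true_and, and_true, if_true,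
          show (1:ℕ) - 1 = 0 by omega, Nat.add_zero, Nat.sub_zero,
          Nat.choose_self, Nat.cast_one, one_mul] at E
        rw [hcd] at E
        exact hne (by linarith)
  -- step 3 : α = 0 and β = 0
  have hξc : ∀ u v : ℕ, coeff (m2 u v) ξ = 0 := by intro u v; rw [hξ0, coeff_zero]
  have hα0 : α = 0 := by
    rw [eq_zero_iff]
    intro d
    have E := key (d 0) (d 1) 0
    simp only [hηc, hξc, mul_zero, ite_self, if_true, if_false,
      show ¬((0:ℕ) = 1) by omega, eq_self_iff_true] at E
    rw [m2_self] at E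
    linarith
  have hβ0 : β = 0 := by
    rw [eq_zero_iff]
    intro d
    have E := key (d 0) (d 1) 1
    simp only [hηc, hξc, mul_zero, ite_self, if_true, if_false,
      show ¬((1:ℕ) = 0) by omega, eq_self_iff_true] at E
    rw [m2_self] at E
    linarith
  exact ⟨hη0, hα0, hβ0, hξ0⟩
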